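/- arXiv:2303.12679 — 2 statements merged into one kernel-verified Lean document; each statement's English description precedes it below -/
import Mathlib

section
/- Let L be a relational language, A a finite L-structure, B a finite L-structure, U a countably infinite L-structure, and k, D positive integers. If U ⟶ (B)^A_{k,D}, then there exists a finite substructure C of U such that C ⟶ (B)^A_{k,D}. -/
/-!
Statement 2 (compactness): Let `L` be a relational language, `A`, `B` finite `L`-structures,
`U` a countably infinite `L`-structure and `k, D` positive integers. If `U ⟶ (B)^A_{k,D}`
then there exists a finite substructure `C` of `U` with `C ⟶ (B)^A_{k,D}`.
-/

open FirstOrder FirstOrder.Language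

/-- `C ⟶ (B)^A_{k,l}`: for every colouring of the embeddings of `A` into `C` with `k` colours
there is an embedding `f : B ↪ C` such that the embeddings of `A` into `C` with range inside
`f[B]` receive at most `l` colours. -/
def Arrow (L : FirstOrder.Language.{0, 0}) (C B A : Type) [L.Structure C] [L.Structure B]
    [L.Structure A] (k l : ℕ) : Prop :=
  ∀ χ : (A ↪[L] C) → Fin k, ∃ f : B ↪[L] C,
    Set.ncard { c : Fin k | ∃ e : A ↪[L] C, Set.range ⇑e ⊆ Set.range ⇑f ∧ χ e = c } ≤ l

/-!
Suppose no finite substructure works. Then for every finite set `s ⊆ U` there is a colouring of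
`(U choose A)` that gives more than `D` colours to the copies of `A` inside every copy of `B`
lying in `s` (a bad colouring of the substructure `s`, extended arbitrarily). Take the pointwise
limit of these colourings along an ultrafilter on the finite subsets of `U` that refines the
order filter; it exists because there are only `k` colours. A copy `f(B)` contains only finitely
many copies of `A`, so the limit agrees on all of them with the colouring of some `s ⊇ f(B)`,
and hence is bad on `f(B)` too. This contradicts `U ⟶ (B)^A_{k,D}`.
-/

namespace FirstOrder.Language

variable {L : Language} {A B C U κ : Type*} [L.Structure A] [L.Structure B] [L.Structure C]
  [L.Structure U]

def copyColours (χ : (A ↪[L] U) → κ) (f : B ↪[L] U) : Set κ :=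
  {c | ∃ e : A ↪[L] U, Set.range e ⊆ Set.range f ∧ χ e = c}

theorem copyColours_congr {χ χ' : (A ↪[L] U) → κ} {f : B ↪[L] U}
    (h : ∀ e : A ↪[L] U, Set.range e ⊆ Set.range f → χ e = χ' e) :
    copyColours χ f = copyColours χ' f := by
  ext c
  exact exists_congr fun e => and_congr_right fun he => by rw [h e he]

theorem copyColours_comp_subset (φ : C ↪[L] U) (χ : (A ↪[L] U) → κ) (f : B ↪[L] C) :
    copyColours (χ ∘ φ.comp) f ⊆ copyColours χ (φ.comp f) := by
  rintro c ⟨e, he, rfl⟩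
  refine ⟨φ.comp e, ?_, rfl⟩
  change Set.range (φ ∘ e) ⊆ Set.range (φ ∘ f)
  simpa only [Set.range_comp] using Set.image_mono he

theorem finite_setOf_range_subset_range [Finite A] [Finite B] (f : B ↪[L] U) :
    {e : A ↪[L] U | Set.range e ⊆ Set.range f}.Finite := by
  refine Set.Finite.of_finite_image ?_ DFunLike.coe_injective.injOn
  refine (Set.Finite.pi fun _ => Set.finite_range f).subset ?_
  rintro _ ⟨e, he, rfl⟩ a -
  exact he (Set.mem_range_self a)

theorem exists_forall_lt_ncard_copyColours_of_substructure [Finite κ] [Nonempty κ] {D : ℕ}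
    (C : L.Substructure U) (χC : (A ↪[L] C) → κ)
    (hχC : ∀ f : B ↪[L] C, D < (copyColours χC f).ncard) :
    ∃ χ : (A ↪[L] U) → κ, ∀ f : B ↪[L] U, Set.range f ⊆ C →
      D < (copyColours χ f).ncard := by
  obtain ⟨c₀⟩ := ‹Nonempty κ›
  let χ := Function.extend C.subtype.comp χC fun _ => c₀
  have hχ : χ ∘ C.subtype.comp = χC := Function.extend_comp C.subtype.comp_injective _ _
  refine ⟨χ, fun f hf => ?_⟩
  have hfC : ∀ b, f b ∈ C := fun b => hf (Set.mem_range_self b)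
  calc D < (copyColours χC (Embedding.codRestrict C f hfC)).ncard := hχC _
    _ ≤ (copyColours χ f).ncard := by
      refine Set.ncard_le_ncard ?_ (Set.toFinite _)
      simpa only [hχ, Embedding.subtype_comp_codRestrict] using
        copyColours_comp_subset C.subtype χ (Embedding.codRestrict C f hfC)

theorem exists_forall_lt_ncard_copyColours [Finite A] [Finite B] [Finite κ] {D : ℕ}
    (χs : Finset U → (A ↪[L] U) → κ)
    (hχs : ∀ (s : Finset U) (f : B ↪[L] U), Set.range f ⊆ s →
      D < (copyColours (χs s) f).ncard) :
    ∃ χ : (A ↪[L] U) → κ, ∀ f : B ↪[L] U, D < (copyColours χ f).ncard := by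
  let u : Ultrafilter (Finset U) := .of Filter.atTop
  have hlim : ∀ e, ∃ c, ∀ᶠ s in u, χs s e = c := fun e =>
    Ultrafilter.eventually_exists_iff.1 (.of_forall fun _ => ⟨_, rfl⟩)
  choose χ hχ using hlim
  refine ⟨χ, fun f => ?_⟩
  have hcontains : ∀ᶠ s : Finset U in u, Set.range f ⊆ s :=
    Ultrafilter.of_le _ <| (Filter.eventually_ge_atTop (Set.finite_range f).toFinset).mono
      fun s hs => by simpa using hs
  have hagree :
      ∀ᶠ s in u, ∀ e ∈ {e : A ↪[L] U | Set.range e ⊆ Set.range f}, χs s e = χ e :=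
    (finite_setOf_range_subset_range f).eventually_all.2 fun e _ => hχ e
  obtain ⟨s, hs, hsχ⟩ := (hcontains.and hagree).exists
  simpa only [copyColours_congr hsχ] using hχs s f hs

end FirstOrder.Language

theorem not_arrow_iff {L : FirstOrder.Language.{0, 0}} {C B A : Type} [L.Structure C]
    [L.Structure B] [L.Structure A] {k l : ℕ} :
    ¬Arrow L C B A k l ↔
      ∃ χ : (A ↪[L] C) → Fin k, ∀ f : B ↪[L] C, l < (copyColours χ f).ncard := by
  simp only [Arrow, copyColours, not_forall, not_exists, not_le]

theorem arrow_compactness_general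
    (L : FirstOrder.Language.{0, 0}) [L.IsRelational]
    (A : Type) [L.Structure A] [Finite A]
    (B : Type) [L.Structure B] [Finite B]
    (U : Type) [L.Structure U]
    (k D : ℕ) (hk : 0 < k)
    (hU : Arrow L U B A k D) :
    ∃ C : L.Substructure U, (C : Set U).Finite ∧ Arrow L C B A k D := by
  by_contra! hC
  have : Nonempty (Fin k) := ⟨⟨0, hk⟩⟩
  have hlocal : ∀ s : Finset U, ∃ χ : (A ↪[L] U) → Fin k, ∀ f : B ↪[L] U,
      Set.range f ⊆ s → D < (copyColours χ f).ncard := by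
    intro s
    have hs : (Substructure.closure L (s : Set U) : Set U) = s :=
      Substructure.closure_eq_of_isRelational L _
    obtain ⟨χC, hχC⟩ := not_arrow_iff.1 (hC _ (hs ▸ s.finite_toSet))
    simpa only [hs] using exists_forall_lt_ncard_copyColours_of_substructure _ χC hχC
  choose χs hχs using hlocal
  obtain ⟨χ, hχ⟩ := exists_forall_lt_ncard_copyColours χs hχs
  obtain ⟨f, hf⟩ := hU χ
  exact (hχ f).not_ge hf

theorem arrow_compactness
    (L : FirstOrder.Language.{0, 0}) [L.IsRelational]
    (A : Type) [L.Structure A] [Finite A]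
    (B : Type) [L.Structure B] [Finite B]
    (U : Type) [L.Structure U] [Countable U] [Infinite U]
    (k D : ℕ) (hk : 0 < k) (hD : 0 < D)
    (hU : Arrow L U B A k D) :
    ∃ C : L.Substructure U, (C : Set U).Finite ∧ Arrow L C B A k D :=
  arrow_compactness_general L A B U k D hk hU
end

section
/- Let L be a finite relational language all of whose relation symbols are unary or binary, F a finite set of finite irreducible L-structures, U a Forb_e(F)-universal countably infinite L-structure, and A a finite F-free L-structure with finite big Ramsey degree D in U. Then for every finite F-free L-structure B and every k ≥ 1 there exists a finite F-free L-structure C such that C ⟶ (B)^A_{k,D}. -/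
/-!
Statement 3: Let `L` be a finite relational language with only unary and binary relation symbols,
`F` a finite set of finite irreducible `L`-structures, `U` a `Forb_e(F)`-universal countably
infinite `L`-structure and `A` a finite `F`-free `L`-structure whose big Ramsey degree in `U`
is the finite number `D`. Then for every finite `F`-free `B` and every `k ≥ 1` there is a finite
`F`-free `C` such that `C ⟶ (B)^A_{k,D}`.
-/

open FirstOrder FirstOrder.Language

/-- A bundled `L`-structure. -/
structure FOStr (L : FirstOrder.Language.{0, 0}) : Type 1 where
  carrier : Type
  str : L.Structure carrier

instance {L : FirstOrder.Language.{0, 0}} (M : FOStr L) : L.Structure M.carrier := M.str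

/-- An `L`-structure is irreducible if every pair of vertices lies in a common tuple of some
relation. -/
def Irred (L : FirstOrder.Language.{0, 0}) (A : Type) [L.Structure A] : Prop :=
  ∀ u v : A, ∃ (n : ℕ) (R : L.Relations n) (t : Fin n → A),
    Structure.RelMap R t ∧ (∃ a, t a = u) ∧ (∃ b, t b = v)

/-- `B` is `F`-free: no member of the family `F` embeds into `B`. -/
def FFree {L : FirstOrder.Language.{0, 0}} {ι : Type} (F : ι → FOStr L) (B : Type)
    [L.Structure B] : Prop :=
  ∀ i, IsEmpty ((F i).carrier ↪[L] B)

/-- Induced structure on a subset of a relational structure. -/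
instance setStr (L : FirstOrder.Language.{0, 0}) [L.IsRelational] {U : Type} [L.Structure U]
    (s : Set U) : L.Structure s where
  funMap f _ := isEmptyElim f
  RelMap R t := Structure.RelMap R fun i => (t i : U)

/-- The inclusion of a subset into a relational structure, as an embedding. -/
def inclEmb (L : FirstOrder.Language.{0, 0}) [L.IsRelational] {U : Type} [L.Structure U]
    (s : Set U) : s ↪[L] U where
  toFun := Subtype.val
  inj' := Subtype.val_injective
  map_fun' f := isEmptyElim f
  map_rel' _ _ := Iff.rfl

/-- Restriction of an embedding to a subset containing its range. -/
def restrictEmb {L : FirstOrder.Language.{0, 0}} [L.IsRelational] {A U : Type} [L.Structure A]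
    [L.Structure U] {s : Set U} (e : A ↪[L] U) (h : ∀ a, e a ∈ s) : A ↪[L] s where
  toFun a := ⟨e a, h a⟩
  inj' a b hab := e.injective (congrArg Subtype.val hab)
  map_fun' f := isEmptyElim f
  map_rel' R x := e.map_rel' R x

theorem big_ramsey_degree_gives_finite_ramsey
    (L : FirstOrder.Language.{0, 0}) [L.IsRelational] [Finite (Σ n, L.Relations n)]
    (harity : ∀ n, n ≠ 1 → n ≠ 2 → IsEmpty (L.Relations n))
    (ι : Type) [Finite ι] (F : ι → FOStr L)
    (hFfin : ∀ i, Finite (F i).carrier) (hFirr : ∀ i, Irred L (F i).carrier)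
    (U : Type) [L.Structure U] [Countable U] [Infinite U]
    (hUfree : FFree F U)
    (hUuniv : ∀ (M : Type) [L.Structure M] [Countable M], FFree F M → Nonempty (M ↪[L] U))
    (A : Type) [L.Structure A] [Finite A] (hAfree : FFree F A)
    (D : ℕ) (hD : IsLeast { d : ℕ | ∀ k : ℕ, 1 ≤ k → Arrow L U U A k d } D) :
    ∀ (B : Type) [L.Structure B] [Finite B], FFree F B →
      ∀ k : ℕ, 1 ≤ k → ∃ C : FOStr L, Finite C.carrier ∧ FFree F C.carrier ∧
        Arrow L C.carrier B A k D := by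
  classical
  intro B _ _ hBfree k hk
  by_contra h0
  push_neg at h0
  -- every finite subset of `U` carries a "bad" colouring
  have hfin : ∀ s : Finset U, Finite ((↑s : Set U)) := fun s => inferInstance
  have hfree : ∀ s : Finset U, FFree F ((↑s : Set U)) := by
    intro s i
    constructor
    intro g
    exact (hUfree i).false ((inclEmb L (↑s : Set U)).comp g)
  have hbad : ∀ s : Finset U, ∃ χ : (A ↪[L] (↑s : Set U)) → Fin k,
      ∀ f : B ↪[L] (↑s : Set U), D <
        Set.ncard { c : Fin k | ∃ e : A ↪[L] (↑s : Set U),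
          Set.range ⇑e ⊆ Set.range ⇑f ∧ χ e = c } := by
    intro s
    have := h0 ⟨(↑s : Set U), inferInstance⟩ (hfin s) (hfree s)
    unfold Arrow at this
    push_neg at this
    exact this
  choose badχ hbadχ using hbad
  -- extend each bad colouring to all embeddings `A ↪ U`
  have hk0 : Fin k := ⟨0, hk⟩
  set χhat : Finset U → (A ↪[L] U) → Fin k := fun s e =>
    if h : ∀ a, e a ∈ (↑s : Set U) then badχ s (restrictEmb e h) else hk0 with hχhat
  -- an ultrafilter extending the `atTop` filter on finite subsets of `U`
  let 𝒰 : Ultrafilter (Finset U) := Ultrafilter.of Filter.atTop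
  have h𝒰 : (𝒰 : Filter (Finset U)) ≤ Filter.atTop := Ultrafilter.of_le _
  -- the limit colouring
  have hlim : ∀ e : A ↪[L] U, ∃ c : Fin k, { s | χhat s e = c } ∈ 𝒰 := by
    intro e
    by_contra hc
    push_neg at hc
    have h1 : ∀ c : Fin k, { s | χhat s e = c }ᶜ ∈ 𝒰 := fun c =>
      (Ultrafilter.compl_mem_iff_notMem).2 (hc c)
    have h2 : (⋂ c : Fin k, { s | χhat s e = c }ᶜ) ∈ 𝒰 := Filter.iInter_mem.2 h1
    have h3 : (⋂ c : Fin k, { s : Finset U | χhat s e = c }ᶜ) = ∅ := by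
      ext s
      simp only [Set.mem_iInter, Set.mem_compl_iff, Set.mem_setOf_eq, Set.mem_empty_iff_false,
        iff_false, not_forall, not_not]
      exact ⟨χhat s e, rfl⟩
    rw [h3] at h2
    exact (Filter.empty_notMem (𝒰 : Filter (Finset U))) h2
  choose χ hχ using hlim
  -- apply the big Ramsey property of `U` to the limit colouring
  obtain ⟨f, hf⟩ := hD.1 k hk χ
  -- embed `B` into `U` and push into the range of `f`
  obtain ⟨g⟩ := hUuniv B hBfree
  set h : B ↪[L] U := f.comp g with hh
  have hrangefin : (Set.range ⇑h).Finite := Set.finite_range _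
  set s₀ : Finset U := hrangefin.toFinset with hs₀
  have hs₀range : ∀ b : B, h b ∈ (↑s₀ : Set U) := by
    intro b
    simp [hs₀, Set.Finite.mem_toFinset]
  -- the set of embeddings of `A` into `s₀` is finite
  set T : Set (A ↪[L] U) := { e | ∀ a, e a ∈ (↑s₀ : Set U) } with hT
  have hTfin : T.Finite := by
    rw [← Set.finite_coe_iff]
    have : Function.Injective (fun e : T => (fun a => (⟨e.1 a, e.2 a⟩ : (↑s₀ : Set U)))) := by
      intro e₁ e₂ hee
      ext1
      apply Embedding.ext
      intro a
      have := congrFun hee a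
      simpa using congrArg Subtype.val this
    exact Finite.of_injective _ this
  -- find a finite set on which the bad colouring agrees with the limit colouring
  have hW : ({ s : Finset U | s₀ ⊆ s } ∩ ⋂ e ∈ T, { s | χhat s e = χ e }) ∈ 𝒰 := by
    apply Filter.inter_mem
    · exact h𝒰 (Filter.Ici_mem_atTop s₀)
    · exact (Filter.biInter_mem hTfin).2 fun e _ => hχ e
  obtain ⟨s, hs⟩ := (𝒰 : Filter (Finset U)).nonempty_of_mem hW
  obtain ⟨hs₀s, hsT⟩ := hs
  simp only [Set.mem_iInter, Set.mem_setOf_eq] at hsT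
  -- restrict `h` to an embedding of `B` into `s`
  have hhmem : ∀ b : B, h b ∈ (↑s : Set U) := by
    intro b
    exact hs₀s (by simpa using hs₀range b)
  set f' : B ↪[L] (↑s : Set U) := restrictEmb h hhmem with hf'
  have hbadf' := hbadχ s f'
  -- transfer colours: the bad colours on `s` are among the good colours on `U`
  have hsub : { c : Fin k | ∃ e' : A ↪[L] (↑s : Set U),
      Set.range ⇑e' ⊆ Set.range ⇑f' ∧ badχ s e' = c } ⊆
      { c : Fin k | ∃ e : A ↪[L] U, Set.range ⇑e ⊆ Set.range ⇑f ∧ χ e = c } := by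
    rintro c ⟨e', hre', hce'⟩
    set e : A ↪[L] U := (inclEmb L (↑s : Set U)).comp e' with he
    have hrange : ∀ a : A, ∃ b : B, h b = e a := by
      intro a
      obtain ⟨b, hb⟩ := hre' (Set.mem_range_self a)
      exact ⟨b, congrArg Subtype.val hb⟩
    have heT : e ∈ T := by
      intro a
      obtain ⟨b, hb⟩ := hrange a
      rw [← hb]
      exact hs₀range b
    have hes : ∀ a, e a ∈ (↑s : Set U) := fun a => (e' a).2
    have hχe : χhat s e = badχ s e' := by
      have h1 : χhat s e = badχ s (restrictEmb e hes) := dif_pos hes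
      have h2 : restrictEmb e hes = e' := Embedding.ext fun a => rfl
      rw [h1, h2]
    refine ⟨e, ?_, ?_⟩
    · rintro u ⟨a, rfl⟩
      obtain ⟨b, hb⟩ := hrange a
      exact ⟨g b, hb⟩
    · rw [← hsT e heT, hχe, hce']
  have hle : Set.ncard { c : Fin k | ∃ e' : A ↪[L] (↑s : Set U),
      Set.range ⇑e' ⊆ Set.range ⇑f' ∧ badχ s e' = c } ≤
      Set.ncard { c : Fin k | ∃ e : A ↪[L] U, Set.range ⇑e ⊆ Set.range ⇑f ∧ χ e = c } :=
    Set.ncard_le_ncard hsub (Set.toFinite _)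
  omega
end
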